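/- In the infinite Levenshtein graph L_a on all finite strings over an alphabet of size a ≥ 2, a vertex u has exactly r(u) neighbors of length |u| − 1, exactly |u|·(a−1) neighbors of length |u|, and exactly a + |u|·(a−1) neighbors of length |u| + 1; hence its degree is a + r(u) + 2|u|(a−1). -/

import Mathlib

/-- Number of runs of a string: length after collapsing consecutive equal characters. -/
def numRuns {α : Type*} [DecidableEq α] (u : List α) : ℕ :=
  (u.destutter (· ≠ ·)).length

/-- Costs of the edit operations (as in the removed `Mathlib.Data.List.EditDistance.Defs`). -/
structure Levenshtein.Cost (α β δ : Type*) where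
  delete : α → δ
  insert : β → δ
  substitute : α → β → δ

/-- Unit costs: deletion and insertion cost 1, substitution costs 0 or 1. -/
def Levenshtein.defaultCost {α : Type*} [DecidableEq α] : Levenshtein.Cost α α ℕ where
  delete _ := 1
  insert _ := 1
  substitute a b := if a = b then 0 else 1

/-- Levenshtein edit distance, by the recursion the removed Mathlib definition satisfied. -/
def levenshtein {α β δ : Type*} [Add δ] [Zero δ] [Min δ] (C : Levenshtein.Cost α β δ) :
    List α → List β → δ
  | [], [] => 0
  | [], y :: ys => C.insert y + levenshtein C [] ys
  | x :: xs, [] => C.delete x + levenshtein C xs []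
  | x :: xs, y :: ys =>
      min (C.delete x + levenshtein C xs (y :: ys))
        (min (C.insert y + levenshtein C (x :: xs) ys) (C.substitute x y + levenshtein C xs ys))

/-- The infinite Levenshtein graph `L_a` on all finite strings over `Fin a`. -/
def levGraphInf (a : ℕ) : SimpleGraph (List (Fin a)) :=
  SimpleGraph.fromRel (fun u v => levenshtein Levenshtein.defaultCost u v = 1)

/-!
A string at Levenshtein distance one from `u` arises from `u` by a single deletion, substitution
or insertion, which change the length by `-1`, `0` and `+1` respectively. Enumerating these edits
by recursion on `u` ("edit the head, or keep the head and edit the tail") yields finite sets whose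
sizes obey simple recurrences: deleting `x` from `x :: y :: t` gives a new string only when
`x ≠ y`, so deletions are counted by runs; a substitution replaces one letter by one of `a - 1`
others; and an insertion is written uniquely as inserting a letter `c` just before a letter
`x ≠ c` (or at the end), giving `a` insertions at the end and `a - 1` before each letter.
-/

open Levenshtein Finset

section Recursion

variable {α β δ : Type*} [Add δ] [Zero δ] [Min δ] (C : Cost α β δ)

@[simp] theorem levenshtein_nil_nil : levenshtein C [] [] = 0 := by
  rw [levenshtein]

@[simp] theorem levenshtein_nil_cons (y : β) (ys : List β) :
    levenshtein C [] (y :: ys) = C.insert y + levenshtein C [] ys := by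
  rw [levenshtein]

@[simp] theorem levenshtein_cons_nil (x : α) (xs : List α) :
    levenshtein C (x :: xs) [] = C.delete x + levenshtein C xs [] := by
  rw [levenshtein]

theorem levenshtein_cons_cons (x : α) (xs : List α) (y : β) (ys : List β) :
    levenshtein C (x :: xs) (y :: ys) =
      min (C.delete x + levenshtein C xs (y :: ys))
        (min (C.insert y + levenshtein C (x :: xs) ys)
          (C.substitute x y + levenshtein C xs ys)) := by
  rw [levenshtein]

end Recursion

section UnitCost

variable {α : Type*} [DecidableEq α] {u v : List α}

@[simp] theorem Levenshtein.defaultCost_delete (x : α) :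
    (defaultCost : Cost α α ℕ).delete x = 1 := rfl

@[simp] theorem Levenshtein.defaultCost_insert (x : α) :
    (defaultCost : Cost α α ℕ).insert x = 1 := rfl

@[simp] theorem Levenshtein.defaultCost_substitute (x y : α) :
    (defaultCost : Cost α α ℕ).substitute x y = if x = y then 0 else 1 := rfl

theorem levenshtein_cons_left_le (x : α) (xs v : List α) :
    levenshtein defaultCost (x :: xs) v ≤ 1 + levenshtein defaultCost xs v := by
  cases v with
  | nil => simp
  | cons y ys => simp [levenshtein_cons_cons]

theorem levenshtein_cons_right_le (u : List α) (y : α) (ys : List α) :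
    levenshtein defaultCost u (y :: ys) ≤ 1 + levenshtein defaultCost u ys := by
  cases u with
  | nil => simp
  | cons x xs => simp [levenshtein_cons_cons]

theorem levenshtein_cons_cons_le (x y : α) (xs ys : List α) :
    levenshtein defaultCost (x :: xs) (y :: ys) ≤
      (if x = y then 0 else 1) + levenshtein defaultCost xs ys := by
  simp [levenshtein_cons_cons]

@[simp] theorem levenshtein_self (u : List α) : levenshtein defaultCost u u = 0 := by
  induction u with
  | nil => simp
  | cons x xs ih => simp [levenshtein_cons_cons, ih]

@[simp] theorem levenshtein_eq_zero_iff : levenshtein defaultCost u v = 0 ↔ u = v := by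
  refine ⟨fun h => ?_, fun h => h ▸ levenshtein_self u⟩
  induction u generalizing v with
  | nil => cases v <;> simp_all
  | cons x xs ih =>
    cases v with
    | nil => simp at h
    | cons y ys =>
      simp only [levenshtein_cons_cons, defaultCost_delete, defaultCost_insert,
        defaultCost_substitute, Nat.min_eq_zero_iff, Nat.add_eq_zero_iff] at h
      rcases h with ⟨h, -⟩ | ⟨h, -⟩ | ⟨hxy, h⟩
      · exact absurd h one_ne_zero
      · exact absurd h one_ne_zero
      · rw [ih h, show x = y by simpa using hxy]

end UnitCost

section Edits

variable {α : Type*} [DecidableEq α] {u v : List α}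

def deletions : List α → Finset (List α)
  | [] => ∅
  | x :: xs => insert xs ((deletions xs).image (x :: ·))

theorem length_of_mem_deletions (h : v ∈ deletions u) :
    v.length + 1 = u.length := by
  induction u generalizing v with
  | nil => simp [deletions] at h
  | cons x xs ih =>
    simp only [deletions, mem_insert, mem_image] at h
    rcases h with rfl | ⟨w, hw, rfl⟩
    · rfl
    · simp [ih hw]

theorem mem_deletions_cons_self (x : α) (u : List α) : u ∈ deletions (x :: u) :=
  mem_insert_self _ _

theorem cons_mem_deletions_cons (x : α) {w : List α} (h : w ∈ deletions u) :
    x :: w ∈ deletions (x :: u) :=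
  mem_insert_of_mem (mem_image_of_mem _ h)

theorem numRuns_cons_cons (x y : α) (t : List α) :
    numRuns (x :: y :: t) = numRuns (y :: t) + if x = y then 0 else 1 := by
  by_cases h : x = y
  · subst h; simp [numRuns, List.destutter_cons']
  · simp [numRuns, List.destutter_cons', h]

theorem card_deletions_cons_cons (x y : α) (t : List α) :
    (deletions (x :: y :: t)).card = (deletions (y :: t)).card + if x = y then 0 else 1 := by
  rw [deletions]
  by_cases h : x = y
  · subst h
    rw [insert_eq_of_mem (mem_image_of_mem _ (by simp [deletions])), if_pos rfl, add_zero,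
      card_image_of_injective _ List.cons_injective]
  · rw [card_insert_of_notMem (by simp [h]), if_neg h,
      card_image_of_injective _ List.cons_injective]

theorem card_deletions : ∀ u : List α, (deletions u).card = numRuns u
  | [] => rfl
  | [_] => by simp [deletions, numRuns]
  | x :: y :: t => by rw [card_deletions_cons_cons, numRuns_cons_cons, card_deletions (y :: t)]

variable [Fintype α]

def substitutions : List α → Finset (List α)
  | [] => ∅
  | x :: xs => (univ.erase x).image (· :: xs) ∪ (substitutions xs).image (x :: ·)

theorem length_of_mem_substitutions (h : v ∈ substitutions u) :
    v.length = u.length := by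
  induction u generalizing v with
  | nil => simp [substitutions] at h
  | cons x xs ih =>
    simp only [substitutions, mem_union, mem_image] at h
    rcases h with ⟨c, -, rfl⟩ | ⟨w, hw, rfl⟩
    · rfl
    · simp [ih hw]

theorem ne_of_mem_substitutions (h : v ∈ substitutions u) : v ≠ u := by
  induction u generalizing v with
  | nil => simp [substitutions] at h
  | cons x xs ih =>
    simp only [substitutions, mem_union, mem_image, mem_erase] at h
    rcases h with ⟨c, ⟨hc, -⟩, rfl⟩ | ⟨w, hw, rfl⟩
    · simp [hc]
    · simp [ih hw]

theorem cons_mem_substitutions_cons_of_ne {x c : α} (h : c ≠ x) (u : List α) :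
    c :: u ∈ substitutions (x :: u) :=
  mem_union_left _ (mem_image_of_mem _ (mem_erase.mpr ⟨h, mem_univ c⟩))

theorem cons_mem_substitutions_cons (x : α) {w : List α} (h : w ∈ substitutions u) :
    x :: w ∈ substitutions (x :: u) :=
  mem_union_right _ (mem_image_of_mem _ h)

theorem mem_substitutions_comm : v ∈ substitutions u ↔ u ∈ substitutions v := by
  suffices ∀ {u v : List α}, v ∈ substitutions u → u ∈ substitutions v from
    ⟨this, this⟩
  intro u v h
  induction u generalizing v with
  | nil => simp [substitutions] at h
  | cons x xs ih =>
    simp only [substitutions, mem_union, mem_image, mem_erase] at h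
    rcases h with ⟨c, ⟨hc, -⟩, rfl⟩ | ⟨w, hw, rfl⟩
    · exact cons_mem_substitutions_cons_of_ne (Ne.symm hc) xs
    · exact cons_mem_substitutions_cons x (ih hw)

def insertions : List α → Finset (List α)
  | [] => univ.image ([·])
  | x :: xs => (univ.erase x).image (· :: x :: xs) ∪ (insertions xs).image (x :: ·)

theorem length_of_mem_insertions (h : v ∈ insertions u) :
    v.length = u.length + 1 := by
  induction u generalizing v with
  | nil => obtain ⟨c, -, rfl⟩ := mem_image.mp h; rfl
  | cons x xs ih =>
    simp only [insertions, mem_union, mem_image] at h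
    rcases h with ⟨c, -, rfl⟩ | ⟨w, hw, rfl⟩
    · rfl
    · simp [ih hw]

theorem cons_mem_insertions_cons (x : α) {w : List α} (h : w ∈ insertions u) :
    x :: w ∈ insertions (x :: u) :=
  mem_union_right _ (mem_image_of_mem _ h)

theorem cons_mem_insertions (c : α) (u : List α) : c :: u ∈ insertions u := by
  induction u with
  | nil => exact mem_image_of_mem _ (mem_univ c)
  | cons x xs ih =>
    by_cases h : c = x
    · exact h ▸ cons_mem_insertions_cons c ih
    · exact mem_union_left _ (mem_image_of_mem _ (mem_erase.mpr ⟨h, mem_univ c⟩))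

theorem mem_insertions_iff_mem_deletions : v ∈ insertions u ↔ u ∈ deletions v := by
  constructor
  · intro h
    induction u generalizing v with
    | nil => obtain ⟨c, -, rfl⟩ := mem_image.mp h; exact mem_deletions_cons_self c []
    | cons x xs ih =>
      simp only [insertions, mem_union, mem_image] at h
      rcases h with ⟨c, -, rfl⟩ | ⟨w, hw, rfl⟩
      · exact mem_deletions_cons_self c _
      · exact cons_mem_deletions_cons x (ih hw)
  · intro h
    induction v generalizing u with
    | nil => simp [deletions] at h
    | cons x xs ih =>
      simp only [deletions, mem_insert, mem_image] at h
      rcases h with rfl | ⟨w, hw, rfl⟩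
      · exact cons_mem_insertions x u
      · exact cons_mem_insertions_cons x (ih hw)

theorem card_image_cons_union_image_cons (x : α) (l : List α) (s : Finset (List α)) :
    ((univ.erase x).image (· :: l) ∪ s.image (x :: ·)).card =
      (Fintype.card α - 1) + s.card := by
  have hdisj : Disjoint ((univ.erase x).image (· :: l)) (s.image (x :: ·)) := by
    simp only [disjoint_left, mem_image, mem_erase]
    rintro _ ⟨c, ⟨hc, -⟩, rfl⟩ ⟨w, -, h⟩
    exact hc (List.cons_eq_cons.mp h).1.symm
  rw [card_union_of_disjoint hdisj,
    card_image_of_injective _ fun c d h => (List.cons_eq_cons.mp h).1,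
    card_image_of_injective _ List.cons_injective, card_erase_of_mem (mem_univ x), card_univ]

theorem card_substitutions (u : List α) :
    (substitutions u).card = u.length * (Fintype.card α - 1) := by
  induction u with
  | nil => simp [substitutions]
  | cons x xs ih =>
    rw [substitutions, card_image_cons_union_image_cons, ih, List.length_cons]
    ring

theorem card_insertions (u : List α) :
    (insertions u).card = Fintype.card α + u.length * (Fintype.card α - 1) := by
  induction u with
  | nil => simp [insertions, card_image_of_injective _ List.singleton_injective]
  | cons x xs ih =>
    rw [insertions, card_image_cons_union_image_cons, ih, List.length_cons]
    ring

def edits (u : List α) : Finset (List α) :=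
  deletions u ∪ substitutions u ∪ insertions u

theorem mem_edits :
    v ∈ edits u ↔ v ∈ deletions u ∨ v ∈ substitutions u ∨ v ∈ insertions u := by
  simp only [edits, mem_union, or_assoc]

theorem deletions_subset_edits : deletions u ⊆ edits u := fun _ h => mem_edits.mpr (Or.inl h)

theorem substitutions_subset_edits : substitutions u ⊆ edits u :=
  fun _ h => mem_edits.mpr (Or.inr (Or.inl h))

theorem insertions_subset_edits : insertions u ⊆ edits u :=
  fun _ h => mem_edits.mpr (Or.inr (Or.inr h))

theorem mem_edits_comm : v ∈ edits u ↔ u ∈ edits v := by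
  rw [mem_edits, mem_edits, mem_insertions_iff_mem_deletions, mem_insertions_iff_mem_deletions,
    mem_substitutions_comm]
  tauto

theorem ne_of_mem_edits (h : v ∈ edits u) : v ≠ u := by
  rintro rfl
  rcases mem_edits.mp h with h | h | h
  · have := length_of_mem_deletions h; omega
  · exact ne_of_mem_substitutions h rfl
  · have := length_of_mem_insertions h; omega

theorem cons_mem_edits_cons (x : α) {w : List α} (h : w ∈ edits u) :
    x :: w ∈ edits (x :: u) := by
  rcases mem_edits.mp h with h | h | h
  · exact deletions_subset_edits (cons_mem_deletions_cons x h)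
  · exact substitutions_subset_edits (cons_mem_substitutions_cons x h)
  · exact insertions_subset_edits (cons_mem_insertions_cons x h)

theorem mem_edits_and_length_eq_pred_iff :
    v ∈ edits u ∧ v.length = u.length - 1 ↔ v ∈ deletions u := by
  refine ⟨fun ⟨h, hl⟩ => ?_, fun h => ⟨deletions_subset_edits h, ?_⟩⟩
  · rcases mem_edits.mp h with h | h | h
    · exact h
    · -- `u.length - 1` truncates, so this case is `u = []`, which has no substitutions.
      obtain rfl : u = [] := List.eq_nil_of_length_eq_zero (by
        have := length_of_mem_substitutions h; omega)
      simp [substitutions] at h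
    · have := length_of_mem_insertions h; omega
  · have := length_of_mem_deletions h; omega

theorem mem_edits_and_length_eq_iff :
    v ∈ edits u ∧ v.length = u.length ↔ v ∈ substitutions u := by
  refine ⟨fun ⟨h, hl⟩ => ?_, fun h => ⟨substitutions_subset_edits h, ?_⟩⟩
  · rcases mem_edits.mp h with h | h | h
    · have := length_of_mem_deletions h; omega
    · exact h
    · have := length_of_mem_insertions h; omega
  · exact length_of_mem_substitutions h

theorem mem_edits_and_length_eq_succ_iff :
    v ∈ edits u ∧ v.length = u.length + 1 ↔ v ∈ insertions u := by
  refine ⟨fun ⟨h, hl⟩ => ?_, fun h => ⟨insertions_subset_edits h, ?_⟩⟩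
  · rcases mem_edits.mp h with h | h | h
    · have := length_of_mem_deletions h; omega
    · have := length_of_mem_substitutions h; omega
    · exact h
  · exact length_of_mem_insertions h

theorem card_edits (u : List α) :
    (edits u).card = (deletions u).card + (substitutions u).card + (insertions u).card := by
  have hds : Disjoint (deletions u) (substitutions u) := disjoint_left.mpr fun v hd hs => by
    have := length_of_mem_deletions hd; have := length_of_mem_substitutions hs; omega
  have hi : Disjoint (deletions u ∪ substitutions u) (insertions u) :=
    disjoint_left.mpr fun v hds hi => by
      have := length_of_mem_insertions hi
      rcases mem_union.mp hds with hd | hs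
      · have := length_of_mem_deletions hd; omega
      · have := length_of_mem_substitutions hs; omega
  rw [edits, card_union_of_disjoint hi, card_union_of_disjoint hds]

theorem levenshtein_le_one_of_mem_edits (h : v ∈ edits u) :
    levenshtein defaultCost u v ≤ 1 := by
  induction u generalizing v with
  | nil =>
    obtain ⟨c, rfl⟩ : ∃ c, [c] = v := by
      simpa [edits, deletions, substitutions, insertions] using h
    simp
  | cons x xs ih =>
    have keep_head {w : List α} (hw : w ∈ edits xs) :
        levenshtein defaultCost (x :: xs) (x :: w) ≤ 1 := by
      simpa using (levenshtein_cons_cons_le x x xs w).trans (by simpa using ih hw)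
    simp only [edits, deletions, substitutions, insertions, mem_union, mem_insert, mem_image] at h
    rcases h with ((rfl | ⟨w, hw, rfl⟩) | ⟨c, -, rfl⟩ | ⟨w, hw, rfl⟩) |
      ⟨c, -, rfl⟩ | ⟨w, hw, rfl⟩
    · simpa using levenshtein_cons_left_le x v v
    · exact keep_head (deletions_subset_edits hw)
    · simpa using (levenshtein_cons_cons_le x c xs xs).trans (by split_ifs <;> simp)
    · exact keep_head (substitutions_subset_edits hw)
    · simpa using levenshtein_cons_right_le (x :: xs) c (x :: xs)
    · exact keep_head (insertions_subset_edits hw)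

theorem eq_or_mem_edits_of_levenshtein_le_one
    (h : levenshtein defaultCost u v ≤ 1) : v = u ∨ v ∈ edits u := by
  induction u generalizing v with
  | nil =>
    cases v with
    | nil => exact Or.inl rfl
    | cons y ys =>
      obtain rfl : ys = [] := by simpa using h
      exact Or.inr (insertions_subset_edits (cons_mem_insertions y []))
  | cons x xs ih =>
    cases v with
    | nil =>
      obtain rfl : xs = [] := by simpa using h
      exact Or.inr (deletions_subset_edits (mem_deletions_cons_self x []))
    | cons y ys =>
      simp only [levenshtein_cons_cons, defaultCost_delete, defaultCost_insert,
        defaultCost_substitute, min_le_iff] at h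
      rcases h with h | h | h
      · obtain rfl : xs = y :: ys := levenshtein_eq_zero_iff.mp (by omega)
        exact Or.inr (deletions_subset_edits (mem_deletions_cons_self x _))
      · obtain rfl : x :: xs = ys := levenshtein_eq_zero_iff.mp (by omega)
        exact Or.inr (insertions_subset_edits (cons_mem_insertions y _))
      · by_cases hxy : x = y
        · subst hxy
          rcases ih (by simpa using h) with rfl | hw
          · exact Or.inl rfl
          · exact Or.inr (cons_mem_edits_cons x hw)
        · obtain rfl : xs = ys := by simpa [hxy] using h
          exact Or.inr (substitutions_subset_edits
            (cons_mem_substitutions_cons_of_ne (Ne.symm hxy) _))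

theorem levenshtein_eq_one_iff : levenshtein defaultCost u v = 1 ↔ v ∈ edits u := by
  refine ⟨fun h => ?_, fun h => ?_⟩
  · rcases eq_or_mem_edits_of_levenshtein_le_one h.le with rfl | hv
    · simp at h
    · exact hv
  · have := levenshtein_le_one_of_mem_edits h
    have : levenshtein defaultCost u v ≠ 0 := by simpa using (ne_of_mem_edits h).symm
    omega

end Edits

theorem levGraphInf_adj_iff {a : ℕ} {u v : List (Fin a)} :
    (levGraphInf a).Adj u v ↔ v ∈ edits u := by
  rw [levGraphInf, SimpleGraph.fromRel_adj, levenshtein_eq_one_iff, levenshtein_eq_one_iff,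
    ← mem_edits_comm, or_self]
  exact and_iff_right_of_imp ne_of_mem_edits

theorem levGraphInf_neighbor_counts_general (a : ℕ) (u : List (Fin a)) :
    {v | (levGraphInf a).Adj u v ∧ v.length = u.length - 1}.ncard = numRuns u ∧
    {v | (levGraphInf a).Adj u v ∧ v.length = u.length}.ncard = u.length * (a - 1) ∧
    {v | (levGraphInf a).Adj u v ∧ v.length = u.length + 1}.ncard = a + u.length * (a - 1) ∧
    ((levGraphInf a).neighborSet u).ncard = a + numRuns u + 2 * u.length * (a - 1) := by
  have hdel : {v | (levGraphInf a).Adj u v ∧ v.length = u.length - 1} = deletions u := by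
    ext; simp [levGraphInf_adj_iff, mem_edits_and_length_eq_pred_iff]
  have hsub : {v | (levGraphInf a).Adj u v ∧ v.length = u.length} = substitutions u := by
    ext; simp [levGraphInf_adj_iff, mem_edits_and_length_eq_iff]
  have hins : {v | (levGraphInf a).Adj u v ∧ v.length = u.length + 1} = insertions u := by
    ext; simp [levGraphInf_adj_iff, mem_edits_and_length_eq_succ_iff]
  have hnbr : (levGraphInf a).neighborSet u = edits u := by
    ext; simp [levGraphInf_adj_iff]
  rw [hdel, hsub, hins, hnbr]
  simp only [Set.ncard_coe_finset, card_edits, card_deletions, card_substitutions,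
    card_insertions, Fintype.card_fin, true_and]
  ring

/-- in `L_a` (a ≥ 2), a vertex `u` has `r(u)` neighbors of length
`|u| − 1`, `|u|(a−1)` neighbors of length `|u|`, and `a + |u|(a−1)` neighbors of
length `|u| + 1`; hence its degree is `a + r(u) + 2|u|(a−1)`. -/
theorem levGraphInf_neighbor_counts (a : ℕ) (ha : 2 ≤ a) (u : List (Fin a)) :
    {v | (levGraphInf a).Adj u v ∧ v.length = u.length - 1}.ncard = numRuns u ∧
    {v | (levGraphInf a).Adj u v ∧ v.length = u.length}.ncard = u.length * (a - 1) ∧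
    {v | (levGraphInf a).Adj u v ∧ v.length = u.length + 1}.ncard = a + u.length * (a - 1) ∧
    ((levGraphInf a).neighborSet u).ncard = a + numRuns u + 2 * u.length * (a - 1) :=
  levGraphInf_neighbor_counts_general a u
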